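/- Cumulative capability set of a pruned history. Let Cap be a type with decidable equality, π : List (Finset Cap) a capability history, y : Cap a capability, and k ≤ l indices valid in π. Define the pruned history π ∖ ⟨y,k,l⟩ as the history obtained from π by replacing the entry at each position i with k ≤ i ≤ l by that entry with y erased (Finset.erase), leaving all other entries unchanged. Then: (i) CSet(π ∖ ⟨y,k,l⟩) ⊆ CSet(π); and (ii) if y does not belong to any entry of π at a position outside the range [k, l], then CSet(π ∖ ⟨y,k,l⟩) = (CSet π).erase y. -/
import Mathlib


/-- The cumulative capability set of a capability history. -/
def CSet {Cap : Type*} [DecidableEq Cap] (w : List (Finset Cap)) : Finset Cap :=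
  w.foldl (· ∪ ·) ∅

/-- The pruned history `π ∖ ⟨y,k,l⟩`: erase `y` from every entry of `π` at a
position `i` with `k ≤ i ≤ l`, leaving all other entries unchanged. -/
def prune {Cap : Type*} [DecidableEq Cap] (π : List (Finset Cap)) (y : Cap) (k l : ℕ) :
    List (Finset Cap) :=
  π.mapIdx (fun i a => if k ≤ i ∧ i ≤ l then a.erase y else a)

lemma foldl_union_eq {Cap : Type*} [DecidableEq Cap] (w : List (Finset Cap)) :
    ∀ b : Finset Cap, w.foldl (· ∪ ·) b = b ∪ CSet w := by
  induction w with
  | nil => intro b; simp [CSet]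
  | cons a w ih =>
    intro b
    simp only [CSet, List.foldl_cons] at *
    rw [ih (b ∪ a), ih (∅ ∪ a)]
    simp [Finset.union_assoc]

lemma mem_CSet {Cap : Type*} [DecidableEq Cap] {w : List (Finset Cap)} {x : Cap} :
    x ∈ CSet w ↔ ∃ i : ℕ, ∃ h : i < w.length, x ∈ w[i] := by
  induction w with
  | nil => simp [CSet]
  | cons a w ih =>
    rw [show CSet (a :: w) = a ∪ CSet w by
      simp only [CSet, List.foldl_cons]; rw [foldl_union_eq]; simp [CSet]]
    simp only [Finset.mem_union, ih]
    constructor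
    · rintro (h | ⟨i, hi, h⟩)
      · exact ⟨0, by simp, h⟩
      · exact ⟨i + 1, by simpa using hi, h⟩
    · rintro ⟨i, hi, h⟩
      cases i with
      | zero => exact Or.inl h
      | succ i => exact Or.inr ⟨i, by simpa using hi, h⟩

lemma mem_CSet_prune {Cap : Type*} [DecidableEq Cap] {π : List (Finset Cap)} {y x : Cap}
    {k l : ℕ} :
    x ∈ CSet (prune π y k l) ↔
      ∃ i : ℕ, ∃ h : i < π.length,
        x ∈ (if k ≤ i ∧ i ≤ l then (π[i]).erase y else π[i]) := by
  rw [mem_CSet]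
  constructor
  · rintro ⟨i, hi, h⟩
    have hi' : i < π.length := by simpa [prune, List.length_mapIdx] using hi
    refine ⟨i, hi', ?_⟩
    simpa [prune, List.getElem_mapIdx] using h
  · rintro ⟨i, hi, h⟩
    refine ⟨i, by simpa [prune, List.length_mapIdx] using hi, ?_⟩
    simpa [prune, List.getElem_mapIdx] using h

theorem cset_prune {Cap : Type*} [DecidableEq Cap] (π : List (Finset Cap)) (y : Cap)
    (k l : ℕ) (hkl : k ≤ l) (hl : l < π.length) :
    CSet (prune π y k l) ⊆ CSet π ∧
    ((∀ (i : ℕ) (h : i < π.length), (i < k ∨ l < i) → y ∉ π.get ⟨i, h⟩) →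
      CSet (prune π y k l) = (CSet π).erase y) := by
  constructor
  · intro x hx
    rw [mem_CSet_prune] at hx
    obtain ⟨i, hi, h⟩ := hx
    rw [mem_CSet]
    refine ⟨i, hi, ?_⟩
    split at h
    · exact Finset.mem_of_mem_erase h
    · exact h
  · intro hout
    ext x
    rw [mem_CSet_prune, Finset.mem_erase, mem_CSet]
    constructor
    · rintro ⟨i, hi, h⟩
      split at h
      · exact ⟨Finset.ne_of_mem_erase h, i, hi, Finset.mem_of_mem_erase h⟩
      · rename_i hc
        push_neg at hc
        have hrange : i < k ∨ l < i := by omega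
        have hyn := hout i hi hrange
        simp only [List.get_eq_getElem] at hyn
        exact ⟨fun heq => hyn (heq ▸ h), i, hi, h⟩
    · rintro ⟨hne, i, hi, h⟩
      refine ⟨i, hi, ?_⟩
      split
      · exact Finset.mem_erase.mpr ⟨hne, h⟩
      · exact h
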